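/- arXiv:1910.01052 — 2 statements merged into one kernel-verified Lean document; each statement's English description precedes it below -/
import Mathlib

section
/- Stefanov–Uhlmann pseudolinearization formula: Let V and Ṽ be smooth vector fields on ℝⁿ with complete flows Z(t,z) and Z̃(t,z). Then for all t and z, Z̃(t,z) − Z(t,z) = ∫₀ᵗ (∂Z̃/∂z)(t−s, Z(s,z)) · (Ṽ − V)(Z(s,z)) ds. -/
/-!
Along `s ↦ Φ (t - s) (Z s z)`, which runs from `Φ t z` to `Z t z`, the chain rule gives the
derivative `-(∂ₜΦ)(t - s, Z s z) + D Φ_{t-s} (Z s z) (V (Z s z))`. The time derivative of a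
flow is its vector field transported by the spatial derivative, `∂ₜΦ(τ, x) = D Φ_τ(x) (W x)`:
differentiate the group law `Φ (τ + s) x = Φ τ (Φ s x)` at `s = 0`. The group law itself comes
from uniqueness of solutions of `y' = W y`, valid since a `C¹` field is locally Lipschitz. The
formula is then the fundamental theorem of calculus.
-/

open Set Function intervalIntegral

section Flow

variable {E G : Type*} [NormedAddCommGroup E] [NormedSpace ℝ E]
  [NormedAddCommGroup G] [NormedSpace ℝ G]

theorem ODE_solution_unique_of_locallyLipschitz {W : E → E} (hW : LocallyLipschitz W)
    {f g : ℝ → E} (hf : ∀ t, HasDerivAt f (W (f t)) t) (hg : ∀ t, HasDerivAt g (W (g t)) t)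
    {t₀ : ℝ} (h : f t₀ = g t₀) : f = g := by
  funext t
  obtain ⟨a, b, ht, ht₀⟩ : ∃ a b, t ∈ Ioo a b ∧ t₀ ∈ Ioo a b :=
    ⟨min t t₀ - 1, max t t₀ + 1, by grind, by grind⟩
  have hfc : Continuous f := continuous_iff_continuousAt.2 fun t => (hf t).continuousAt
  have hgc : Continuous g := continuous_iff_continuousAt.2 fun t => (hg t).continuousAt
  -- Over `[a, b]` both trajectories stay in a compact set, on which `W` is Lipschitz.
  set K := f '' Icc a b ∪ g '' Icc a b
  obtain ⟨L, hL⟩ := hW.locallyLipschitzOn.exists_lipschitzOnWith_of_compact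
    ((isCompact_Icc.image hfc).union (isCompact_Icc.image hgc) : IsCompact K)
  exact ODE_solution_unique_of_mem_Icc (v := fun _ => W) (s := fun _ => K) (fun _ _ => hL) ht₀
    hfc.continuousOn (fun t _ => hf t)
    (fun t ht => .inl (mem_image_of_mem f (Ioo_subset_Icc_self ht)))
    hgc.continuousOn (fun t _ => hg t)
    (fun t ht => .inr (mem_image_of_mem g (Ioo_subset_Icc_self ht)))
    h (Ioo_subset_Icc_self ht)

structure IsFlowOf (W : E → E) (Φ : ℝ → E → E) : Prop where
  map_zero : ∀ x, Φ 0 x = x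
  hasDerivAt : ∀ t x, HasDerivAt (Φ · x) (W (Φ t x)) t

namespace IsFlowOf

variable {W : E → E} {Φ : ℝ → E → E}

theorem map_add (hΦ : IsFlowOf W Φ) (hW : LocallyLipschitz W) (t s : ℝ) (x : E) :
    Φ (t + s) x = Φ t (Φ s x) := by
  have := ODE_solution_unique_of_locallyLipschitz hW
    (fun τ => (hΦ.hasDerivAt (τ + s) x).comp_add_const τ s) (fun τ => hΦ.hasDerivAt τ (Φ s x))
    (t₀ := 0) (by simp [hΦ.map_zero])
  exact congrFun this t

theorem fderiv_apply_field (hΦ : IsFlowOf W Φ) (hW : LocallyLipschitz W) {t : ℝ} {x : E}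
    (hdiff : DifferentiableAt ℝ (Φ t) x) :
    fderiv ℝ (Φ t) x (W x) = W (Φ t x) := by
  have hcomp : HasDerivAt (fun s => Φ t (Φ s x)) (fderiv ℝ (Φ t) x (W x)) 0 := by
    have h0 := hΦ.hasDerivAt 0 x
    have hd : HasFDerivAt (Φ t) (fderiv ℝ (Φ t) x) (Φ 0 x) := by
      rw [hΦ.map_zero]; exact hdiff.hasFDerivAt
    rw [hΦ.map_zero] at h0
    exact (hd.comp_hasDerivAt 0 h0 :)
  have hshift : HasDerivAt (fun s => Φ (t + s) x) (W (Φ t x)) 0 := by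
    simpa using (hΦ.hasDerivAt (t + 0) x).comp_const_add t 0
  simp only [← hΦ.map_add hW] at hcomp
  exact hcomp.unique hshift

end IsFlowOf

theorem hasDerivAt_uncurry_comp {F : ℝ → E → G} {τ : ℝ → ℝ} {x : ℝ → E} {s τ' : ℝ} {x' : E}
    {F' : G} (hF : DifferentiableAt ℝ (uncurry F) (τ s, x s))
    (hFτ : HasDerivAt (F · (x s)) F' (τ s)) (hτ : HasDerivAt τ τ' s) (hx : HasDerivAt x x' s) :
    HasDerivAt (fun r => F (τ r) (x r)) (τ' • F' + fderiv ℝ (F (τ s)) (x s) x') s := by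
  set L := fderiv ℝ (uncurry F) (τ s, x s)
  have htime : L (1, 0) = F' :=
    (hF.hasFDerivAt.comp_hasDerivAt (τ s)
      ((hasDerivAt_id (τ s)).prodMk (hasDerivAt_const (τ s) (x s))) :).unique hFτ
  have hspace : fderiv ℝ (F (τ s)) (x s) = L.comp (.inr ℝ ℝ E) :=
    (hF.hasFDerivAt.comp (x s) ((hasFDerivAt_const _ _).prodMk (hasFDerivAt_id _))).fderiv
  have hsplit : L (τ', x') = τ' • L (1, 0) + L (0, x') := by
    rw [← L.map_smul, ← L.map_add]; simp
  have hchain := hF.hasFDerivAt.comp_hasDerivAt s (hτ.prodMk hx)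
  rw [hsplit, htime] at hchain
  rw [hspace]
  exact hchain

end Flow

section Pseudolinearization

variable {E : Type*} [NormedAddCommGroup E] [NormedSpace ℝ E] [CompleteSpace E]

theorem IsFlowOf.sub_eq_integral_fderiv {V W : E → E} {Z Φ : ℝ → E → E}
    (hV : Continuous V) (hW : LocallyLipschitz W) (hZ : IsFlowOf V Z) (hΦ : IsFlowOf W Φ)
    (hΦ₁ : ContDiff ℝ 1 (uncurry Φ)) (t : ℝ) (z : E) :
    Φ t z - Z t z = ∫ s in (0 : ℝ)..t, fderiv ℝ (Φ (t - s)) (Z s z) (W (Z s z) - V (Z s z)) := by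
  set I := fun s => fderiv ℝ (Φ (t - s)) (Z s z) (W (Z s z) - V (Z s z))
  have hZc : Continuous (Z · z) :=
    continuous_iff_continuousAt.2 fun s => (hZ.hasDerivAt s z).continuousAt
  have hIc : Continuous I := by
    have hΦt : ContDiff ℝ 1 (uncurry fun s => Φ (t - s)) :=
      hΦ₁.comp ((contDiff_const.sub contDiff_fst).prodMk contDiff_snd)
    exact (Continuous.fderiv_one hΦt hZc).clm_apply
      ((hW.continuous.comp hZc).sub (hV.comp hZc))
  have hderiv : ∀ s, HasDerivAt (fun s => Φ (t - s) (Z s z)) (-I s) s := by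
    intro s
    have hΦs : ContDiff ℝ 1 (Φ (t - s)) := hΦ₁.comp (contDiff_const.prodMk contDiff_id)
    have h := hasDerivAt_uncurry_comp (hΦ₁.differentiable one_ne_zero _)
      (hΦ.hasDerivAt (t - s) (Z s z)) ((hasDerivAt_id' s).const_sub t) (hZ.hasDerivAt s z)
    rw [← hΦ.fderiv_apply_field hW (hΦs.differentiable one_ne_zero _)] at h
    convert h using 1
    simp only [I, map_sub, neg_one_smul, neg_sub, neg_add_eq_sub]
  have hftc := integral_eq_sub_of_hasDerivAt (fun s _ => hderiv s) (hIc.neg.intervalIntegrable 0 t)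
  rw [integral_neg, sub_self, sub_zero, hZ.map_zero, hΦ.map_zero] at hftc
  rw [← neg_sub, ← hftc, neg_neg]

end Pseudolinearization

theorem stmt_3_general (n : ℕ) (V W : (Fin n → ℝ) → (Fin n → ℝ))
    (Z ZW : ℝ → (Fin n → ℝ) → (Fin n → ℝ))
    (hV : ContDiff ℝ (⊤ : ℕ∞) V) (hW : ContDiff ℝ (⊤ : ℕ∞) W)
    (hZWsmooth : ContDiff ℝ (⊤ : ℕ∞) (fun p : ℝ × (Fin n → ℝ) => ZW p.1 p.2))
    (hZ0 : ∀ z, Z 0 z = z) (hZW0 : ∀ z, ZW 0 z = z)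
    (hZflow : ∀ t z, HasDerivAt (fun s => Z s z) (V (Z t z)) t)
    (hZWflow : ∀ t z, HasDerivAt (fun s => ZW s z) (W (ZW t z)) t)
    (t : ℝ) (z : Fin n → ℝ) :
    ZW t z - Z t z =
      ∫ s in (0:ℝ)..t,
        (fderiv ℝ (fun w => ZW (t - s) w) (Z s z)) (W (Z s z) - V (Z s z)) :=
  IsFlowOf.sub_eq_integral_fderiv hV.continuous (hW.of_le (by norm_cast)).locallyLipschitz
    ⟨hZ0, hZflow⟩ ⟨hZW0, hZWflow⟩ (hZWsmooth.of_le (by norm_cast)) t z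

/-- Stefanov–Uhlmann pseudolinearization formula: for smooth vector fields `V`, `W` with
complete flows `Z`, `ZW`,
`ZW(t,z) − Z(t,z) = ∫₀ᵗ (∂ZW/∂z)(t−s, Z(s,z)) · (W − V)(Z(s,z)) ds`. -/
theorem stmt_3 (n : ℕ) (V W : (Fin n → ℝ) → (Fin n → ℝ))
    (Z ZW : ℝ → (Fin n → ℝ) → (Fin n → ℝ))
    (hV : ContDiff ℝ (⊤ : ℕ∞) V) (hW : ContDiff ℝ (⊤ : ℕ∞) W)
    (hZsmooth : ContDiff ℝ (⊤ : ℕ∞) (fun p : ℝ × (Fin n → ℝ) => Z p.1 p.2))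
    (hZWsmooth : ContDiff ℝ (⊤ : ℕ∞) (fun p : ℝ × (Fin n → ℝ) => ZW p.1 p.2))
    (hZ0 : ∀ z, Z 0 z = z) (hZW0 : ∀ z, ZW 0 z = z)
    (hZflow : ∀ t z, HasDerivAt (fun s => Z s z) (V (Z t z)) t)
    (hZWflow : ∀ t z, HasDerivAt (fun s => ZW s z) (W (ZW t z)) t)
    (t : ℝ) (z : Fin n → ℝ) :
    ZW t z - Z t z =
      ∫ s in (0:ℝ)..t,
        (fderiv ℝ (fun w => ZW (t - s) w) (Z s z)) (W (Z s z) - V (Z s z)) :=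
  stmt_3_general n V W Z ZW hV hW hZWsmooth hZ0 hZW0 hZflow hZWflow t z
end

section
/- With G₋ as above and A = (a₁₁−a₅₅)ξ_I² + (a₃₃−a₅₅)ξ_T², B = 4E²ξ_I²ξ_T², assuming A > 0 and A² − B > 0, one has ∂G₋/∂a₁₁ = −4E²ξ_I⁴ξ_T² / (√(A²−B)(√(A²−B)+A)) and ∂G₋/∂a₃₃ = −4E²ξ_I²ξ_T⁴ / (√(A²−B)(√(A²−B)+A)). In particular both are ≤ 0, vanishing when E² = 0 or ξ_Iξ_T = 0. -/
/-! Both partial derivatives have the shape `k - k A / √(A² - B)` with `k = ξ_I²` resp.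
`ξ_T²`, and the identity `1 - A / √(A² - B) = -B / (√(A² - B) (√(A² - B) + A))` turns this into a
quotient with nonnegative numerator `k B` and positive denominator. -/

open Real

lemma one_sub_div_sqrt_sq_sub {A B : ℝ} (hA : 0 < A) (hAB : 0 < A ^ 2 - B) :
    1 - A / √(A ^ 2 - B) = -B / (√(A ^ 2 - B) * (√(A ^ 2 - B) + A)) := by
  have hs : 0 < √(A ^ 2 - B) := sqrt_pos.mpr hAB
  have hsq : √(A ^ 2 - B) ^ 2 = A ^ 2 - B := sq_sqrt hAB.le
  field_simp
  linear_combination hsq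

lemma hasDerivAt_sub_sqrt_sq_sub {f g : ℝ → ℝ} {k x A B : ℝ} (hf : HasDerivAt f k x)
    (hg : HasDerivAt g k x) (hgx : g x = A) (hA : 0 < A) (hAB : 0 < A ^ 2 - B) :
    HasDerivAt (fun y => f y - √(g y ^ 2 - B))
      (-(k * B) / (√(A ^ 2 - B) * (√(A ^ 2 - B) + A))) x := by
  have hsqrt : HasDerivAt (fun y => √(g y ^ 2 - B)) (k * (A / √(A ^ 2 - B))) x := by
    convert ((hg.fun_pow 2).sub_const B).sqrt (by rw [hgx]; exact hAB.ne') using 1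
    rw [hgx]
    field_simp
    ring
  refine (hf.sub hsqrt).congr_deriv ?_
  rw [← mul_one_sub, one_sub_div_sqrt_sq_sub hA hAB]
  ring

/-- Formulas for the derivatives of the `qSV` wave speed `G₋` in the parameters `a₁₁`, `a₃₃`:
`∂G₋/∂a₁₁ = −4E²ξ_I⁴ξ_T²/(√(A²−B)(√(A²−B)+A))`,
`∂G₋/∂a₃₃ = −4E²ξ_I²ξ_T⁴/(√(A²−B)(√(A²−B)+A))`; in particular both are `≤ 0`, vanishing
when `E² = 0` or `ξ_I²ξ_T² = 0`. -/
theorem stmt_12 (a11 a33 a55 E2 ξI2 ξT2 : ℝ)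
    (hξI : 0 ≤ ξI2) (hξT : 0 ≤ ξT2) (hE : 0 ≤ E2)
    (A B : ℝ) (hA : A = (a11 - a55) * ξI2 + (a33 - a55) * ξT2)
    (hB : B = 4 * E2 * ξI2 * ξT2)
    (hApos : 0 < A) (hAB : 0 < A ^ 2 - B)
    (Gm : ℝ → ℝ → ℝ)
    (hGm : ∀ t u, Gm t u = (t + a55) * ξI2 + (u + a55) * ξT2 -
      Real.sqrt (((t - a55) * ξI2 + (u - a55) * ξT2) ^ 2 - 4 * E2 * ξI2 * ξT2)) :
    deriv (fun t => Gm t a33) a11 =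
        -(4 * E2 * ξI2 ^ 2 * ξT2) / (Real.sqrt (A ^ 2 - B) * (Real.sqrt (A ^ 2 - B) + A)) ∧
    deriv (fun u => Gm a11 u) a33 =
        -(4 * E2 * ξI2 * ξT2 ^ 2) / (Real.sqrt (A ^ 2 - B) * (Real.sqrt (A ^ 2 - B) + A)) ∧
    deriv (fun t => Gm t a33) a11 ≤ 0 ∧ deriv (fun u => Gm a11 u) a33 ≤ 0 ∧
    (E2 = 0 ∨ ξI2 * ξT2 = 0 →
      deriv (fun t => Gm t a33) a11 = 0 ∧ deriv (fun u => Gm a11 u) a33 = 0) := by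
  subst hB
  have hden : 0 < √(A ^ 2 - 4 * E2 * ξI2 * ξT2) * (√(A ^ 2 - 4 * E2 * ξI2 * ξT2) + A) :=
    mul_pos (sqrt_pos.mpr hAB) (by positivity)
  have hI : deriv (fun t => Gm t a33) a11 = -(4 * E2 * ξI2 ^ 2 * ξT2) /
      (√(A ^ 2 - 4 * E2 * ξI2 * ξT2) * (√(A ^ 2 - 4 * E2 * ξI2 * ξT2) + A)) := by
    simp only [hGm]
    have hf : HasDerivAt (fun t => (t + a55) * ξI2 + (a33 + a55) * ξT2) ξI2 a11 := by
      simpa using ((hasDerivAt_id a11).add_const a55).mul_const ξI2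
        |>.add_const ((a33 + a55) * ξT2)
    have hg : HasDerivAt (fun t => (t - a55) * ξI2 + (a33 - a55) * ξT2) ξI2 a11 := by
      simpa using ((hasDerivAt_id a11).sub_const a55).mul_const ξI2
        |>.add_const ((a33 - a55) * ξT2)
    rw [(hasDerivAt_sub_sqrt_sq_sub hf hg hA.symm hApos hAB).deriv]
    ring
  have hT : deriv (fun u => Gm a11 u) a33 = -(4 * E2 * ξI2 * ξT2 ^ 2) /
      (√(A ^ 2 - 4 * E2 * ξI2 * ξT2) * (√(A ^ 2 - 4 * E2 * ξI2 * ξT2) + A)) := by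
    simp only [hGm]
    have hf : HasDerivAt (fun u => (a11 + a55) * ξI2 + (u + a55) * ξT2) ξT2 a33 := by
      simpa using ((hasDerivAt_id a33).add_const a55).mul_const ξT2
        |>.const_add ((a11 + a55) * ξI2)
    have hg : HasDerivAt (fun u => (a11 - a55) * ξI2 + (u - a55) * ξT2) ξT2 a33 := by
      simpa using ((hasDerivAt_id a33).sub_const a55).mul_const ξT2
        |>.const_add ((a11 - a55) * ξI2)
    rw [(hasDerivAt_sub_sqrt_sq_sub hf hg hA.symm hApos hAB).deriv]
    ring
  rw [hI, hT]
  refine ⟨rfl, rfl, div_nonpos_of_nonpos_of_nonneg (neg_nonpos.mpr (by positivity)) hden.le,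
    div_nonpos_of_nonpos_of_nonneg (neg_nonpos.mpr (by positivity)) hden.le, ?_⟩
  rintro (h | h)
  · simp [h]
  · rcases mul_eq_zero.mp h with h | h <;> simp [h]
end
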